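/- arXiv:1908.10855 — 2 statements merged into one kernel-verified Lean document; each statement's English description precedes it below -/
import Mathlib

section
/- Let A_n = E[det G] where G is a symmetric n×n Gaussian matrix with N(0,1) off-diagonal and N(0,2) diagonal entries. Then A_n satisfies the recursion A_n = -(n-1)·A_{n-2} for n ≥ 2, with A_1 = 0 and A_2 = -1. -/
/-!
Expanding `det G = ∑ σ, sign σ * ∏ i, G (σ i) i` and using independence, the expectation of the
term of `σ` is a product of Gaussian moments `E[X_e ^ m_e]` over the upper-triangular entries `e`,
where `m_e` counts the `i` with `{σ i, i} = e`. A fixed point, or an `i` with `σ (σ i) ≠ i`, gives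
an entry of multiplicity one, whose first moment vanishes; a fixed-point-free involution gives
off-diagonal entries of multiplicity two, with second moment one. Hence `E[det G]` is `0` for odd
`n` and, for `n = 2k`, the signed count `(-1) ^ k * c_k` of fixed-point-free involutions, where
`c_{k+1} = (2k+1) c_k` follows from the size `(2k)! / (2 ^ k * k!)` of the conjugacy class of
cycle type `2 ^ k`.
-/

open MeasureTheory ProbabilityTheory

/-- A random symmetric `n × n` matrix whose entries are independent (up to symmetry),
standard Gaussian `N(0,1)` off the diagonal and `N(0,2)` on the diagonal. -/
def IsSymmGaussianEnsemble {Ω : Type*} [MeasurableSpace Ω] (μ : Measure Ω) {n : ℕ}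
    (G : Ω → Matrix (Fin n) (Fin n) ℝ) : Prop :=
  (∀ ω, (G ω).IsSymm) ∧
  iIndepFun
    (fun (p : {p : Fin n × Fin n // p.1 ≤ p.2}) ω => G ω p.1.1 p.1.2) μ ∧
  (∀ i j : Fin n, i < j → Measure.map (fun ω => G ω i j) μ = gaussianReal 0 1) ∧
  (∀ i : Fin n, Measure.map (fun ω => G ω i i) μ = gaussianReal 0 2)

open Finset Equiv
open scoped Nat NNReal

namespace Equiv.Perm

def fixedPointFreeInvolutions (α : Type*) [Fintype α] [DecidableEq α] : Finset (Perm α) :=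
  {σ | σ ^ 2 = 1 ∧ ∀ a, σ a ≠ a}

section
variable {α : Type*} [Fintype α] [DecidableEq α]

lemma mem_fixedPointFreeInvolutions {σ : Perm α} :
    σ ∈ fixedPointFreeInvolutions α ↔ ∀ a, σ (σ a) = a ∧ σ a ≠ a := by
  simp [fixedPointFreeInvolutions, forall_and, Perm.ext_iff, sq]

lemma support_eq_univ_iff_forall_ne {σ : Perm α} : σ.support = univ ↔ ∀ a, σ a ≠ a := by
  simp [Finset.eq_univ_iff_forall]

lemma card_eq_two_mul_card_cycleType {σ : Perm α} (h2 : σ ^ 2 = 1) (hfix : ∀ a, σ a ≠ a) :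
    Fintype.card α = 2 * Multiset.card σ.cycleType := by
  rw [← card_univ, ← support_eq_univ_iff_forall_ne.2 hfix, ← sum_cycleType,
    cycleType_of_pow_prime_eq_one h2, Multiset.sum_replicate, smul_eq_mul, mul_comm,
    Multiset.card_replicate]

lemma pow_two_eq_one_and_forall_ne_iff_cycleType_eq {k : ℕ} (hα : Fintype.card α = 2 * k)
    {σ : Perm α} :
    σ ^ 2 = 1 ∧ (∀ a, σ a ≠ a) ↔ σ.cycleType = Multiset.replicate k 2 := by
  constructor
  · rintro ⟨h2, hfix⟩
    have hk : Multiset.card σ.cycleType = k := by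
      have := card_eq_two_mul_card_cycleType h2 hfix
      omega
    rw [cycleType_of_pow_prime_eq_one h2, hk]
  · intro hσ
    refine ⟨pow_prime_eq_one_iff.2 fun c hc ↦ ?_, support_eq_univ_iff_forall_ne.1 ?_⟩
    · rw [hσ] at hc
      exact Multiset.eq_of_mem_replicate hc
    · apply eq_univ_of_card
      rw [← sum_cycleType, hσ, Multiset.sum_replicate, smul_eq_mul, hα, mul_comm]

lemma card_fixedPointFreeInvolutions_mul {k : ℕ} (hα : Fintype.card α = 2 * k) :
    #(fixedPointFreeInvolutions α) * (2 ^ k * k !) = (2 * k)! := by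
  have hfilter : fixedPointFreeInvolutions α =
      ({σ | σ.cycleType = Multiset.replicate k 2} : Finset (Perm α)) :=
    filter_congr fun _ _ ↦ pow_two_eq_one_and_forall_ne_iff_cycleType_eq hα
  have hfact : ∏ m ∈ (Multiset.replicate k 2).toFinset,
      ((Multiset.replicate k 2).count m)! = k ! := by
    rw [Multiset.toFinset_replicate]
    split_ifs with hk <;> simp [hk]
  have hsum : (Multiset.replicate k 2).sum = Fintype.card α := by
    rw [Multiset.sum_replicate, smul_eq_mul, hα, mul_comm]
  have h := card_of_cycleType_mul_eq (α := α) (Multiset.replicate k 2)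
  rw [hfact, hsum, if_pos ⟨le_rfl, fun a ha ↦ (Multiset.eq_of_mem_replicate ha).ge⟩] at h
  simpa [hfilter, hα, mul_assoc] using h

lemma fixedPointFreeInvolutions_eq_empty (hα : Odd (Fintype.card α)) :
    fixedPointFreeInvolutions α = ∅ := by
  refine filter_eq_empty_iff.2 fun σ _ ⟨h2, hfix⟩ ↦ ?_
  rw [card_eq_two_mul_card_cycleType h2 hfix] at hα
  exact Nat.not_odd_iff_even.2 (even_two_mul _) hα

lemma sign_of_mem_fixedPointFreeInvolutions {k : ℕ} (hα : Fintype.card α = 2 * k) {σ : Perm α}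
    (hσ : σ ∈ fixedPointFreeInvolutions α) : sign σ = (-1) ^ k := by
  obtain ⟨h2, hfix⟩ := (mem_filter.1 hσ).2
  have : IsEmpty (Function.fixedPoints σ) := ⟨fun ⟨a, ha⟩ ↦ hfix a ha⟩
  rw [sign_of_pow_two_eq_one h2, Fintype.card_eq_zero (α := Function.fixedPoints σ), hα]
  simp

lemma sum_sign_fixedPointFreeInvolutions {k : ℕ} (hα : Fintype.card α = 2 * k) :
    ∑ σ ∈ fixedPointFreeInvolutions α, (sign σ : ℤ) =
      (-1) ^ k * #(fixedPointFreeInvolutions α) := by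
  rw [sum_congr rfl fun σ hσ ↦ by rw [sign_of_mem_fixedPointFreeInvolutions hα hσ], sum_const,
    nsmul_eq_mul, mul_comm]
  push_cast
  rfl

lemma card_fixedPointFreeInvolutions_fin_two_mul_add_two (k : ℕ) :
    #(fixedPointFreeInvolutions (Fin (2 * k + 2))) =
      (2 * k + 1) * #(fixedPointFreeInvolutions (Fin (2 * k))) := by
  have h1 := card_fixedPointFreeInvolutions_mul (α := Fin (2 * k + 2)) (k := k + 1)
    (by rw [Fintype.card_fin]; ring)
  have h0 := card_fixedPointFreeInvolutions_mul (Fintype.card_fin (2 * k))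
  have hfact : (2 * (k + 1))! = (2 * k + 2) * (2 * k + 1) * (2 * k)! := by
    rw [show 2 * (k + 1) = 2 * k + 1 + 1 by ring, Nat.factorial_succ, Nat.factorial_succ]
    ring
  apply Nat.eq_of_mul_eq_mul_right (by positivity : 0 < (2 * k + 2) * (2 ^ k * k !))
  rw [hfact, ← h0, Nat.factorial_succ, pow_succ] at h1
  linear_combination h1

theorem sum_sign_fixedPointFreeInvolutions_fin_add_two (n : ℕ) :
    ∑ σ ∈ fixedPointFreeInvolutions (Fin (n + 2)), (sign σ : ℤ) =
      -(n + 1) * ∑ σ ∈ fixedPointFreeInvolutions (Fin n), (sign σ : ℤ) := by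
  obtain ⟨k, rfl | rfl⟩ := Nat.even_or_odd' n
  · rw [sum_sign_fixedPointFreeInvolutions (k := k + 1) (by rw [Fintype.card_fin]; ring),
      sum_sign_fixedPointFreeInvolutions (Fintype.card_fin (2 * k)),
      card_fixedPointFreeInvolutions_fin_two_mul_add_two]
    push_cast
    ring
  · rw [fixedPointFreeInvolutions_eq_empty (by rw [Fintype.card_fin]; exact ⟨k + 1, by ring⟩),
      fixedPointFreeInvolutions_eq_empty (by rw [Fintype.card_fin]; exact ⟨k, rfl⟩)]
    simp

end

section
variable {α : Type*} [Fintype α] [LinearOrder α]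

def upperEdge (σ : Perm α) (a : α) : {p : α × α // p.1 ≤ p.2} := Sym2.sortEquiv s(σ a, a)

lemma card_upperEdge_fiber (σ : Perm α) (a : α) :
    #{b | σ.upperEdge b = σ.upperEdge a} = if σ (σ a) = a ∧ σ a ≠ a then 2 else 1 := by
  have hfiber : ∀ b, σ.upperEdge b = σ.upperEdge a ↔ b = a ∨ (b = σ a ∧ σ (σ a) = a) := by
    intro b
    rw [upperEdge, upperEdge, Sym2.sortEquiv.injective.eq_iff, Sym2.eq_iff]
    constructor
    · rintro (⟨-, rfl⟩ | ⟨h, rfl⟩)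
      · exact Or.inl rfl
      · exact Or.inr ⟨rfl, h⟩
    · rintro (rfl | ⟨rfl, h⟩)
      · exact Or.inl ⟨rfl, rfl⟩
      · exact Or.inr ⟨h, rfl⟩
  split_ifs with h
  · rw [card_eq_two]
    exact ⟨a, σ a, h.2.symm, by ext b; simp [hfiber, h.1]⟩
  · rw [card_eq_one]
    refine ⟨a, ?_⟩
    ext b
    simp only [mem_filter, mem_univ, true_and, hfiber, mem_singleton]
    constructor
    · rintro (rfl | ⟨rfl, h'⟩)
      · rfl
      · exact not_and_not_right.1 h h'
    · exact Or.inl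

end

end Equiv.Perm

lemma Matrix.IsSymm.apply_inf_sup {ι R : Type*} [LinearOrder ι] {M : Matrix ι ι R}
    (hM : M.IsSymm) (i j : ι) : M i j = M (i ⊓ j) (i ⊔ j) := by
  rcases le_total i j with h | h
  · simp [h]
  · simp [h, hM.apply i j]

lemma integral_pow_two_gaussianReal_zero (v : ℝ≥0) : ∫ x, x ^ 2 ∂gaussianReal 0 v = v := by
  rw [← variance_of_integral_eq_zero aemeasurable_id' integral_id_gaussianReal,
    variance_fun_id_gaussianReal]

section
variable {Ω : Type*} [MeasurableSpace Ω] {μ : Measure Ω}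

lemma integrable_prod_of_forall_memLp [IsFiniteMeasure μ] {ι : Type*} [Fintype ι]
    {f : ι → Ω → ℝ} (hf : ∀ i (p : ℝ≥0), MemLp (f i) p μ) :
    Integrable (fun ω ↦ ∏ i, f i ω) μ := by
  refine (MemLp.prod' (s := univ) (p := fun _ ↦ Fintype.card ι)
    fun i _ ↦ hf i (Fintype.card ι)).integrable ?_
  rw [ENNReal.one_le_inv, sum_const, card_univ, nsmul_eq_mul]
  exact ENNReal.mul_inv_le_one _

lemma ProbabilityTheory.iIndepFun.integral_prod_comp_eq_prod_pow {ι κ : Type*} [Fintype ι]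
    [Fintype κ] [DecidableEq κ] {X : κ → Ω → ℝ} (hX : iIndepFun X μ)
    (hXm : ∀ k, AEMeasurable (X k) μ) (e : ι → κ) :
    ∫ ω, ∏ i, X (e i) ω ∂μ = ∏ k, ∫ ω, X k ω ^ #{i | e i = k} ∂μ := by
  have hprod : ∀ ω, ∏ i, X (e i) ω = ∏ k, X k ω ^ #{i | e i = k} := fun ω ↦ by
    rw [← prod_fiberwise univ e]
    refine prod_congr rfl fun k _ ↦ ?_
    rw [prod_congr rfl fun i hi ↦ by rw [(mem_filter.1 hi).2], prod_const]
  simp_rw [hprod]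
  exact hX.integral_fun_prod_comp (f := fun k x ↦ x ^ #{i | e i = k}) hXm
    fun k ↦ (continuous_pow _).aestronglyMeasurable

end

namespace IsSymmGaussianEnsemble

variable {Ω : Type*} [MeasurableSpace Ω] {μ : Measure Ω} {n : ℕ}
  {G : Ω → Matrix (Fin n) (Fin n) ℝ}

lemma map_upper (hG : IsSymmGaussianEnsemble μ G) (p : {p : Fin n × Fin n // p.1 ≤ p.2}) :
    μ.map (fun ω ↦ G ω p.1.1 p.1.2) = gaussianReal 0 (if p.1.1 = p.1.2 then 2 else 1) := by
  obtain ⟨-, -, hoff, hdiag⟩ := hG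
  obtain ⟨⟨i, j⟩, hij : i ≤ j⟩ := p
  rcases hij.eq_or_lt with rfl | hij
  · rw [if_pos rfl]
    exact hdiag i
  · rw [if_neg hij.ne]
    exact hoff i j hij

lemma aemeasurable_upper (hG : IsSymmGaussianEnsemble μ G)
    (p : {p : Fin n × Fin n // p.1 ≤ p.2}) : AEMeasurable (fun ω ↦ G ω p.1.1 p.1.2) μ :=
  .of_map_ne_zero <| by rw [hG.map_upper p]; exact IsProbabilityMeasure.ne_zero _

lemma memLp_upper (hG : IsSymmGaussianEnsemble μ G) (p : {p : Fin n × Fin n // p.1 ≤ p.2})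
    (q : ℝ≥0) : MemLp (fun ω ↦ G ω p.1.1 p.1.2) q μ := by
  rw [← Function.id_comp (fun ω ↦ G ω p.1.1 p.1.2), ← memLp_map_measure_iff
    aestronglyMeasurable_id (hG.aemeasurable_upper p), hG.map_upper p]
  exact memLp_id_gaussianReal q

lemma integral_upper_pow (hG : IsSymmGaussianEnsemble μ G)
    (p : {p : Fin n × Fin n // p.1 ≤ p.2}) (k : ℕ) :
    ∫ ω, G ω p.1.1 p.1.2 ^ k ∂μ = ∫ x, x ^ k ∂gaussianReal 0 (if p.1.1 = p.1.2 then 2 else 1) := by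
  rw [← hG.map_upper p, integral_map (hG.aemeasurable_upper p)
    (continuous_pow k).aestronglyMeasurable]

lemma prod_apply_perm_eq (hG : IsSymmGaussianEnsemble μ G) (σ : Perm (Fin n)) (ω : Ω) :
    ∏ i, G ω (σ i) i = ∏ i, G ω (σ.upperEdge i).1.1 (σ.upperEdge i).1.2 := by
  simp [Perm.upperEdge, ← (hG.1 ω).apply_inf_sup]

lemma integrable_prod_apply_perm (hG : IsSymmGaussianEnsemble μ G) (σ : Perm (Fin n)) :
    Integrable (fun ω ↦ ∏ i, G ω (σ i) i) μ := by
  have := hG.2.1.isProbabilityMeasure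
  simp_rw [hG.prod_apply_perm_eq σ]
  exact integrable_prod_of_forall_memLp fun i q ↦ hG.memLp_upper _ q

lemma integral_prod_apply_perm (hG : IsSymmGaussianEnsemble μ G) (σ : Perm (Fin n)) :
    ∫ ω, ∏ i, G ω (σ i) i ∂μ = if σ ∈ Perm.fixedPointFreeInvolutions (Fin n) then 1 else 0 := by
  simp_rw [hG.prod_apply_perm_eq σ]
  rw [hG.2.1.integral_prod_comp_eq_prod_pow hG.aemeasurable_upper σ.upperEdge]
  simp_rw [hG.integral_upper_pow]
  split_ifs with hσ
  · refine prod_eq_one fun p _ ↦ ?_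
    by_cases hp : ∃ i, σ.upperEdge i = p
    · obtain ⟨i, rfl⟩ := hp
      have hi := Perm.mem_fixedPointFreeInvolutions.1 hσ i
      have hoff : (σ.upperEdge i).1.1 ≠ (σ.upperEdge i).1.2 := inf_eq_sup.not.2 hi.2
      rw [Perm.card_upperEdge_fiber, if_pos hi, if_neg hoff, integral_pow_two_gaussianReal_zero]
      rfl
    · simp only [not_exists] at hp
      simp [filter_false_of_mem fun i _ ↦ hp i]
  · obtain ⟨i, hi⟩ : ∃ i, ¬(σ (σ i) = i ∧ σ i ≠ i) := by
      simpa [Perm.mem_fixedPointFreeInvolutions] using hσ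
    refine prod_eq_zero (mem_univ (σ.upperEdge i)) ?_
    simp_rw [Perm.card_upperEdge_fiber, if_neg hi, pow_one]
    exact integral_id_gaussianReal

lemma integral_det (hG : IsSymmGaussianEnsemble μ G) :
    ∫ ω, (G ω).det ∂μ =
      ((∑ σ ∈ Perm.fixedPointFreeInvolutions (Fin n), (Perm.sign σ : ℤ) : ℤ) : ℝ) := by
  simp_rw [Matrix.det_apply, Units.smul_def, zsmul_eq_mul]
  rw [integral_finsetSum _ fun σ _ ↦ (hG.integrable_prod_apply_perm σ).const_mul _]
  simp_rw [integral_const_mul, hG.integral_prod_apply_perm, mul_ite, mul_one, mul_zero,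
    sum_ite_mem, univ_inter]
  push_cast
  rfl

end IsSymmGaussianEnsemble

/-- `A n = E[det G]` satisfies the recursion `A n = -(n-1) A (n-2)` for `n ≥ 2`,
with initial values `A 1 = 0` and `A 2 = -1`. -/
theorem expected_det_symm_gaussian_recursion :
    (∀ (n : ℕ), 2 ≤ n →
      ∀ (Ω Ω' : Type) (_ : MeasurableSpace Ω) (_ : MeasurableSpace Ω')
        (μ : Measure Ω) (μ' : Measure Ω'),
        IsProbabilityMeasure μ → IsProbabilityMeasure μ' →
        ∀ (G : Ω → Matrix (Fin n) (Fin n) ℝ)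
          (G' : Ω' → Matrix (Fin (n - 2)) (Fin (n - 2)) ℝ),
          IsSymmGaussianEnsemble μ G → IsSymmGaussianEnsemble μ' G' →
          ∫ ω, (G ω).det ∂μ = -((n : ℝ) - 1) * ∫ ω, (G' ω).det ∂μ') ∧
    (∀ (Ω : Type) (_ : MeasurableSpace Ω) (μ : Measure Ω), IsProbabilityMeasure μ →
      ∀ (G : Ω → Matrix (Fin 1) (Fin 1) ℝ), IsSymmGaussianEnsemble μ G →
        ∫ ω, (G ω).det ∂μ = 0) ∧
    (∀ (Ω : Type) (_ : MeasurableSpace Ω) (μ : Measure Ω), IsProbabilityMeasure μ →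
      ∀ (G : Ω → Matrix (Fin 2) (Fin 2) ℝ), IsSymmGaussianEnsemble μ G →
        ∫ ω, (G ω).det ∂μ = -1) := by
  refine ⟨fun n hn Ω Ω' _ _ μ μ' _ _ G G' hG hG' ↦ ?_, fun Ω _ μ _ G hG ↦ ?_,
    fun Ω _ μ _ G hG ↦ ?_⟩
  · obtain ⟨m, rfl⟩ := Nat.exists_eq_add_of_le' hn
    rw [hG.integral_det, hG'.integral_det, Nat.add_sub_cancel,
      Perm.sum_sign_fixedPointFreeInvolutions_fin_add_two]
    push_cast
    ring
  · rw [hG.integral_det, Perm.fixedPointFreeInvolutions_eq_empty (by simp)]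
    simp
  · rw [hG.integral_det, Perm.sum_sign_fixedPointFreeInvolutions_fin_add_two]
    simp [Perm.fixedPointFreeInvolutions, filter_eq']
end

section
/- With the overlaps p_{kℓ} as above (p_{kk} = Σ_{α∈I}u_k(α)² − C₀, p_{kℓ} = Σ_{α∈I}u_k(α)u_ℓ(α)) and the operator X = X_{k₁k₂} = Σ_α(u_{k₁}(α)∂_{u_{k₂}(α)} − u_{k₂}(α)∂_{u_{k₁}(α)}), one has X²(p_{k₁k₁}p_{k₂k₂} − p_{k₁k₂}²) = 0. -/
/-- The overlap `p_{kℓ} = Σ_{α∈I} u_k(α) u_ℓ(α) − C₀·1_{k=ℓ}` as a function of the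
configuration of vectors `u : Fin N → Fin N → ℝ`. -/
def pOv {N : ℕ} (I : Finset (Fin N)) (C₀ : ℝ) (k l : Fin N)
    (u : Fin N → Fin N → ℝ) : ℝ :=
  (∑ α ∈ I, u k α * u l α) - if k = l then C₀ else 0

/-- The rotation generator `X_{kℓ} = Σ_α (u_k(α) ∂_{u_ℓ(α)} − u_ℓ(α) ∂_{u_k(α)})`
acting on smooth functions of the configuration `u`. -/
noncomputable def XU {N : ℕ} (k l : Fin N) (f : (Fin N → Fin N → ℝ) → ℝ)
    (u : Fin N → Fin N → ℝ) : ℝ :=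
  ∑ α : Fin N,
    (u k α * fderiv ℝ f u (Pi.single l (Pi.single α 1))
      - u l α * fderiv ℝ f u (Pi.single k (Pi.single α 1)))

/-!
`X_{k₁k₂}` is the derivative along the infinitesimal rotation `u_{k₂} ↦ u_{k₁}`,
`u_{k₁} ↦ -u_{k₂}`, so it is a derivation, and on the overlaps it acts by
`X p₁₁ = -2 p₁₂`, `X p₂₂ = 2 p₁₂`, `X p₁₂ = p₁₁ - p₂₂` (the shift `C₀` cancels in the last one).
Hence `X (p₁₁ p₂₂ - p₁₂²) = -2 p₁₂ p₂₂ + 2 p₁₁ p₁₂ - 2 p₁₂ (p₁₁ - p₂₂) = 0` identically: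
the shifted Gram determinant is rotation invariant, and applying `X` once more gives `0`.
-/

variable {N : ℕ}

def rotField (k l : Fin N) (u : Fin N → Fin N → ℝ) : Fin N → Fin N → ℝ :=
  Pi.single l (u k) - Pi.single k (u l)

theorem rotField_apply_left {k l : Fin N} (h : k ≠ l) (u : Fin N → Fin N → ℝ) :
    rotField k l u k = -u l := by
  simp [rotField, h]

theorem rotField_apply_right {k l : Fin N} (h : k ≠ l) (u : Fin N → Fin N → ℝ) :
    rotField k l u l = u k := by
  simp [rotField, h.symm]

theorem pi_single_eq_sum_smul {ι κ R : Type*} [DecidableEq ι] [DecidableEq κ] [Fintype κ]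
    [Semiring R] (m : ι) (x : κ → R) :
    (Pi.single m x : ι → κ → R) = ∑ α, x α • Pi.single m (Pi.single α 1) := by
  ext i β
  by_cases hi : i = m
  · subst hi; simp [Pi.single_apply]
  · simp [hi]

theorem XU_eq_fderiv_rotField (k l : Fin N) (f : (Fin N → Fin N → ℝ) → ℝ)
    (u : Fin N → Fin N → ℝ) : XU k l f u = fderiv ℝ f u (rotField k l u) := by
  rw [rotField, pi_single_eq_sum_smul l, pi_single_eq_sum_smul k, ← Finset.sum_sub_distrib,
    map_sum]
  simp only [XU, map_sub, map_smul, smul_eq_mul]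

theorem XU_const (k l : Fin N) (c : ℝ) (u : Fin N → Fin N → ℝ) :
    XU k l (fun _ => c) u = 0 := by
  simp [XU]

section Derivation

variable {k l : Fin N} {f g : (Fin N → Fin N → ℝ) → ℝ} {u : Fin N → Fin N → ℝ}

theorem XU_fun_sub (hf : DifferentiableAt ℝ f u) (hg : DifferentiableAt ℝ g u) :
    XU k l (fun v => f v - g v) u = XU k l f u - XU k l g u := by
  simp only [XU_eq_fderiv_rotField, fderiv_fun_sub hf hg, sub_apply]

theorem XU_fun_mul (hf : DifferentiableAt ℝ f u) (hg : DifferentiableAt ℝ g u) :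
    XU k l (fun v => f v * g v) u = f u * XU k l g u + g u * XU k l f u := by
  simp only [XU_eq_fderiv_rotField, fderiv_fun_mul hf hg, add_apply, smul_apply, smul_eq_mul]

theorem XU_fun_sq (hf : DifferentiableAt ℝ f u) :
    XU k l (fun v => f v ^ 2) u = 2 * f u * XU k l f u := by
  simp only [XU_eq_fderiv_rotField, fderiv_fun_pow 2 hf, smul_apply]
  simp [smul_eq_mul]

end Derivation

noncomputable def coord (c α : Fin N) : (Fin N → Fin N → ℝ) →L[ℝ] ℝ :=
  (ContinuousLinearMap.proj (R := ℝ) α).comp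
    (ContinuousLinearMap.proj (R := ℝ) (φ := fun _ : Fin N => Fin N → ℝ) c)

theorem hasFDerivAt_coord (c α : Fin N) (u : Fin N → Fin N → ℝ) :
    HasFDerivAt (fun v : Fin N → Fin N → ℝ => v c α) (coord c α) u :=
  (coord c α).hasFDerivAt

theorem hasFDerivAt_pOv (I : Finset (Fin N)) (C₀ : ℝ) (a b : Fin N) (u : Fin N → Fin N → ℝ) :
    HasFDerivAt (pOv I C₀ a b) (∑ α ∈ I, (u a α • coord b α + u b α • coord a α)) u :=
  (HasFDerivAt.fun_sum fun α _ =>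
    (hasFDerivAt_coord a α u).mul (hasFDerivAt_coord b α u)).sub_const _

theorem XU_pOv (I : Finset (Fin N)) (C₀ : ℝ) (k l a b : Fin N) (u : Fin N → Fin N → ℝ) :
    XU k l (pOv I C₀ a b) u
      = ∑ α ∈ I, (rotField k l u a α * u b α + u a α * rotField k l u b α) := by
  rw [XU_eq_fderiv_rotField, (hasFDerivAt_pOv I C₀ a b u).fderiv]
  simp only [coord, sum_apply, add_apply, smul_apply, smul_eq_mul,
    ContinuousLinearMap.coe_comp, Function.comp_apply, ContinuousLinearMap.proj_apply]
  exact Finset.sum_congr rfl fun _ _ => by ring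

section TwoParticles

variable (I : Finset (Fin N)) (C₀ : ℝ) {k₁ k₂ : Fin N}

theorem XU_pOv_left_left (h : k₁ ≠ k₂) (u : Fin N → Fin N → ℝ) :
    XU k₁ k₂ (pOv I C₀ k₁ k₁) u = -2 * pOv I C₀ k₁ k₂ u := by
  rw [XU_pOv, rotField_apply_left h]
  simp only [pOv, if_neg h, sub_zero, Finset.mul_sum]
  exact Finset.sum_congr rfl fun _ _ => by simp only [Pi.neg_apply]; ring

theorem XU_pOv_right_right (h : k₁ ≠ k₂) (u : Fin N → Fin N → ℝ) :
    XU k₁ k₂ (pOv I C₀ k₂ k₂) u = 2 * pOv I C₀ k₁ k₂ u := by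
  rw [XU_pOv, rotField_apply_right h]
  simp only [pOv, if_neg h, sub_zero, Finset.mul_sum]
  exact Finset.sum_congr rfl fun _ _ => by ring

theorem XU_pOv_left_right (h : k₁ ≠ k₂) (u : Fin N → Fin N → ℝ) :
    XU k₁ k₂ (pOv I C₀ k₁ k₂) u = pOv I C₀ k₁ k₁ u - pOv I C₀ k₂ k₂ u := by
  rw [XU_pOv, rotField_apply_left h, rotField_apply_right h]
  simp only [pOv, sub_sub_sub_cancel_right, ← Finset.sum_sub_distrib]
  exact Finset.sum_congr rfl fun _ _ => by simp only [Pi.neg_apply]; ring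

theorem XU_pOv_det_eq_zero (h : k₁ ≠ k₂) (u : Fin N → Fin N → ℝ) :
    XU k₁ k₂ (fun v => pOv I C₀ k₁ k₁ v * pOv I C₀ k₂ k₂ v - pOv I C₀ k₁ k₂ v ^ 2) u = 0 := by
  have hp : ∀ a b, DifferentiableAt ℝ (pOv I C₀ a b) u := fun a b =>
    (hasFDerivAt_pOv I C₀ a b u).differentiableAt
  rw [XU_fun_sub ((hp _ _).fun_mul (hp _ _)) ((hp _ _).fun_pow 2),
    XU_fun_mul (hp _ _) (hp _ _), XU_fun_sq (hp _ _),
    XU_pOv_left_left I C₀ h, XU_pOv_right_right I C₀ h, XU_pOv_left_right I C₀ h]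
  ring

end TwoParticles

/-- Two-particle Fermionic eigenvector moment flow identity:
`X_{k₁k₂}² (p_{k₁k₁} p_{k₂k₂} − p_{k₁k₂}²) = 0`. -/
theorem Xrot_sq_det_two_particles {N : ℕ} (I : Finset (Fin N)) (C₀ : ℝ)
    (k₁ k₂ : Fin N) (h : k₁ ≠ k₂) (u : Fin N → Fin N → ℝ) :
    XU k₁ k₂ (XU k₁ k₂
        (fun v => pOv I C₀ k₁ k₁ v * pOv I C₀ k₂ k₂ v - (pOv I C₀ k₁ k₂ v) ^ 2)) u
      = 0 := by
  rw [funext (XU_pOv_det_eq_zero I C₀ h)]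
  exact XU_const k₁ k₂ 0 u
end
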